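/- Every complex-valued Banach limit L : ℓ^∞(ℂ) → ℂ satisfies |L(a)| ≤ w(T_a) for all a ∈ ℓ^∞; consequently, the operator norm of L with respect to the norm ‖a‖_w := w(T_a) equals 1. -/

import Mathlib

open Filter Finset Topology

/-- The numerical range of the weighted forward shift `T_a` on `ℓ²`:
values `⟨T_a x, x⟩ = ∑ a_k x_k conj (x_{k+1})` over unit vectors `x ∈ ℓ²`. -/
noncomputable def numRange (a : ℕ → ℂ) : Set ℂ :=
  {z | ∃ x : ℕ → ℂ, (∑' k, ‖x k‖ ^ 2) = (1 : ℝ) ∧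
    z = ∑' k, a k * x k * (starRingEnd ℂ) (x (k + 1))}

/-- The numerical radius `w(T_a)` of the weighted forward shift. -/
noncomputable def numRad (a : ℕ → ℂ) : ℝ := sSup ((fun z : ℂ => ‖z‖) '' numRange a)

/-- `a ∈ ℓ^∞`. -/
def IsBddSeq (a : ℕ → ℂ) : Prop := ∃ C : ℝ, ∀ k, ‖a k‖ ≤ C

/-- The uniform norm `‖a‖_∞`. -/
noncomputable def supNorm (a : ℕ → ℂ) : ℝ := ⨆ k, ‖a k‖

/-- `sup_{j ∈ ℕ} (1/n) ∑_{k=1}^n |a_{k+j-1}|` (0-based indexing). -/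
noncomputable def avgSup (a : ℕ → ℂ) (n : ℕ) : ℝ :=
  ⨆ j : ℕ, (∑ k ∈ Finset.range n, ‖a (k + j)‖) / n

/-- `sup_{j ∈ ℕ} (∏_{k=1}^n |a_{k+j-1}|)^{1/n}` (0-based indexing). -/
noncomputable def prodSup (a : ℕ → ℂ) (n : ℕ) : ℝ :=
  ⨆ j : ℕ, (∏ k ∈ Finset.range n, ‖a (k + j)‖) ^ ((1 : ℝ) / n)

-- boundedness of the numerical range
lemma numRange_norm_le {a : ℕ → ℂ} {C : ℝ} (hC : ∀ k, ‖a k‖ ≤ C) :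
    ∀ z ∈ numRange a, ‖z‖ ≤ C := by
  rintro z ⟨x, hx, rfl⟩
  have hC0 : 0 ≤ C := le_trans (norm_nonneg _) (hC 0)
  have hs : Summable (fun k => ‖x k‖ ^ 2) := by
    by_contra h
    rw [tsum_eq_zero_of_not_summable h] at hx
    norm_num at hx
  have hs' : Summable (fun k => ‖x (k + 1)‖ ^ 2) := by
    simpa using (summable_nat_add_iff 1).mpr hs
  have hg : Summable (fun k => C * ((‖x k‖ ^ 2 + ‖x (k + 1)‖ ^ 2) / 2)) :=
    (((hs.add hs').div_const 2).mul_left C)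
  have hbound : ∀ k, ‖a k * x k * (starRingEnd ℂ) (x (k + 1))‖ ≤
      C * ((‖x k‖ ^ 2 + ‖x (k + 1)‖ ^ 2) / 2) := by
    intro k
    rw [norm_mul, norm_mul, RingHomIsometric.norm_map]
    have h1 : ‖x k‖ * ‖x (k + 1)‖ ≤ (‖x k‖ ^ 2 + ‖x (k + 1)‖ ^ 2) / 2 := by
      nlinarith [sq_nonneg (‖x k‖ - ‖x (k + 1)‖)]
    calc ‖a k‖ * ‖x k‖ * ‖x (k + 1)‖ ≤ C * (‖x k‖ * ‖x (k + 1)‖) := by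
          rw [mul_assoc]
          exact mul_le_mul_of_nonneg_right (hC k) (by positivity)
      _ ≤ C * ((‖x k‖ ^ 2 + ‖x (k + 1)‖ ^ 2) / 2) :=
          mul_le_mul_of_nonneg_left h1 hC0
  have hsf : Summable (fun k => ‖a k * x k * (starRingEnd ℂ) (x (k + 1))‖) :=
    Summable.of_nonneg_of_le (fun k => norm_nonneg _) hbound hg
  calc ‖∑' k, a k * x k * (starRingEnd ℂ) (x (k + 1))‖
      ≤ ∑' k, ‖a k * x k * (starRingEnd ℂ) (x (k + 1))‖ := norm_tsum_le_tsum_norm hsf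
    _ ≤ ∑' k, C * ((‖x k‖ ^ 2 + ‖x (k + 1)‖ ^ 2) / 2) := Summable.tsum_le_tsum hbound hsf hg
    _ = C * ((1 + ∑' k, ‖x (k + 1)‖ ^ 2) / 2) := by
        rw [tsum_mul_left, tsum_div_const, Summable.tsum_add hs hs', hx]
    _ ≤ C * ((1 + 1) / 2) := by
        have : ∑' k, ‖x (k + 1)‖ ^ 2 ≤ 1 := by
          rw [← hx, Summable.tsum_eq_zero_add hs]
          have := sq_nonneg ‖x 0‖
          linarith
        have : (1 + ∑' k, ‖x (k + 1)‖ ^ 2) / 2 ≤ (1 + 1) / 2 := by linarith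
        exact mul_le_mul_of_nonneg_left this hC0
    _ = C := by ring

lemma zero_mem_numRange (a : ℕ → ℂ) : (0 : ℂ) ∈ numRange a := by
  refine ⟨fun m => if m = 0 then 1 else 0, ?_, ?_⟩
  · rw [tsum_eq_single 0 (by intro b hb; simp [hb])]
    simp
  · rw [tsum_eq_single 0 (by intro b hb; simp [hb, Nat.succ_ne_zero])]
    simp

lemma avg_mem_numRange (a : ℕ → ℂ) (n k : ℕ) :
    (∑ j ∈ Finset.range n, a (k + j)) / ((n : ℂ) + 1) ∈ numRange a := by
  set c : ℝ := (Real.sqrt (n + 1))⁻¹ with hc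
  have hn1 : (0:ℝ) < (n:ℝ) + 1 := by positivity
  have hsq : c ^ 2 = ((n : ℝ) + 1)⁻¹ := by
    rw [hc, inv_pow, Real.sq_sqrt hn1.le]
  set x : ℕ → ℂ := fun m => if m ∈ Finset.Icc k (k + n) then (c : ℂ) else 0 with hxdef
  refine ⟨x, ?_, ?_⟩
  · have h1 : ∀ m ∉ Finset.Icc k (k + n), ‖x m‖ ^ 2 = 0 := by
      intro m hm
      have : x m = 0 := if_neg hm
      simp [this]
    rw [tsum_eq_sum h1]
    have : ∀ m ∈ Finset.Icc k (k + n), ‖x m‖ ^ 2 = ((n : ℝ) + 1)⁻¹ := by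
      intro m hm
      simp only [hxdef, if_pos hm, Complex.norm_real, Real.norm_eq_abs, sq_abs]
      rw [← hsq]
    rw [Finset.sum_congr rfl this, Finset.sum_const, Nat.card_Icc]
    have : k + n + 1 - k = n + 1 := by omega
    rw [this]
    rw [nsmul_eq_mul]
    push_cast
    field_simp
  · have h1 : ∀ m ∉ Finset.Ico k (k + n), a m * x m * (starRingEnd ℂ) (x (m + 1)) = 0 := by
      intro m hm
      rw [Finset.mem_Ico, not_and_or, not_le, not_lt] at hm
      rcases hm with hm | hm
      · have : x m = 0 := by simp [hxdef, Finset.mem_Icc]; omega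
        simp [this]
      · have : x (m + 1) = 0 := by simp [hxdef, Finset.mem_Icc]; omega
        simp [this]
    rw [tsum_eq_sum h1]
    have h2 : ∀ m ∈ Finset.Ico k (k + n),
        a m * x m * (starRingEnd ℂ) (x (m + 1)) = a m * ((n : ℂ) + 1)⁻¹ := by
      intro m hm
      rw [Finset.mem_Ico] at hm
      have hm1 : x m = (c : ℂ) := by simp [hxdef, Finset.mem_Icc]; omega
      have hm2 : x (m + 1) = (c : ℂ) := by simp [hxdef, Finset.mem_Icc]; omega
      rw [hm1, hm2, Complex.conj_ofReal, mul_assoc, ← Complex.ofReal_mul, ← sq, hsq]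
      push_cast
      ring
    rw [Finset.sum_congr rfl h2, ← Finset.sum_mul, div_eq_mul_inv]
    congr 1
    rw [Finset.sum_Ico_eq_sum_range]
    simp [add_comm]

lemma numRange_bdd {a : ℕ → ℂ} {C : ℝ} (hC : ∀ k, ‖a k‖ ≤ C) :
    BddAbove ((fun z : ℂ => ‖z‖) '' numRange a) := by
  refine ⟨C, ?_⟩
  rintro - ⟨z, hz, rfl⟩
  exact numRange_norm_le hC z hz

lemma numRad_nonneg {a : ℕ → ℂ} {C : ℝ} (hC : ∀ k, ‖a k‖ ≤ C) : 0 ≤ numRad a := by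
  have := le_csSup (numRange_bdd hC) ⟨0, zero_mem_numRange a, norm_zero⟩
  simpa [numRad] using this

lemma numRad_le {a : ℕ → ℂ} {C : ℝ} (hC : ∀ k, ‖a k‖ ≤ C) : numRad a ≤ C :=
  csSup_le ⟨0, 0, zero_mem_numRange a, norm_zero⟩ (by rintro - ⟨z, hz, rfl⟩; exact numRange_norm_le hC z hz)

lemma norm_le_numRad {a : ℕ → ℂ} {C : ℝ} (hC : ∀ k, ‖a k‖ ≤ C) {z : ℂ}
    (hz : z ∈ numRange a) : ‖z‖ ≤ numRad a :=
  le_csSup (numRange_bdd hC) ⟨z, hz, rfl⟩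

theorem stmt16 (L : lp (fun _ : ℕ => ℂ) ⊤ →ₗ[ℂ] ℂ)
    (hshift : ∀ a b : lp (fun _ : ℕ => ℂ) ⊤, (∀ k, b k = a (k + 1)) → L a = L b)
    (hpos : ∀ a : lp (fun _ : ℕ => ℂ) ⊤, (∀ k, ∃ r : ℝ, 0 ≤ r ∧ a k = r) →
      ∃ s : ℝ, 0 ≤ s ∧ L a = s)
    (hone : ∀ a : lp (fun _ : ℕ => ℂ) ⊤, (∀ k, a k = 1) → L a = 1)
    (hbd : ∀ a : lp (fun _ : ℕ => ℂ) ⊤, ‖L a‖ ≤ ‖a‖)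
    (hlim : ∀ (a : lp (fun _ : ℕ => ℂ) ⊤) (l : ℂ),
      Tendsto (fun k => a k) atTop (𝓝 l) → L a = l) :
    (∀ a : lp (fun _ : ℕ => ℂ) ⊤, ‖L a‖ ≤ numRad (fun k => a k)) ∧
    IsLeast {c : ℝ | 0 ≤ c ∧ ∀ a : lp (fun _ : ℕ => ℂ) ⊤,
      ‖L a‖ ≤ c * numRad (fun k => a k)} 1 := by
  have key : ∀ a : lp (fun _ : ℕ => ℂ) ⊤, ‖L a‖ ≤ numRad (fun k => a k) := by
    intro a
    have hCa : ∀ k, ‖a k‖ ≤ ‖a‖ := fun k =>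
      lp.norm_apply_le_norm ENNReal.top_ne_zero a k
    set R := numRad (fun k => a k) with hR
    have hR0 : 0 ≤ R := numRad_nonneg hCa
    -- shifts
    have hmem : ∀ j : ℕ, Memℓp (fun k => a (k + j)) ⊤ := by
      intro j
      apply memℓp_infty
      refine ⟨‖a‖, ?_⟩
      rintro - ⟨k, rfl⟩
      exact hCa _
    set S : ℕ → lp (fun _ : ℕ => ℂ) ⊤ := fun j => ⟨fun k => a (k + j), hmem j⟩ with hS
    have hSapp : ∀ j k, (S j) k = a (k + j) := fun j k => rfl
    have hLS : ∀ j, L (S j) = L a := by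
      intro j
      induction j with
      | zero =>
        have : S 0 = a := lp.ext (funext fun k => by simp [hSapp])
        rw [this]
      | succ j ih =>
        rw [← ih]
        symm
        apply hshift (S j) (S (j + 1))
        intro k
        rw [hSapp, hSapp]
        have : k + (j + 1) = k + 1 + j := by omega
        rw [this]
    -- bound for each n
    have hn : ∀ n : ℕ, 0 < n → ‖L a‖ ≤ ((n : ℝ) + 1) / n * R := by
      intro n hn
      set b : lp (fun _ : ℕ => ℂ) ⊤ := ((n : ℂ))⁻¹ • ∑ j ∈ Finset.range n, S j with hb
      have hbapp : ∀ k, b k = ((n : ℂ))⁻¹ * ∑ j ∈ Finset.range n, a (k + j) := by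
        intro k
        rw [hb]
        rw [lp.coeFn_smul, Pi.smul_apply, lp.coeFn_sum]
        simp [hSapp, smul_eq_mul]
      have hLb : L b = L a := by
        rw [hb, map_smul, map_sum]
        rw [Finset.sum_congr rfl fun j _ => hLS j]
        simp [smul_eq_mul]
        rw [← mul_assoc, inv_mul_cancel₀ (by exact_mod_cast hn.ne' : (n : ℂ) ≠ 0), one_mul]
      have hbnorm : ‖b‖ ≤ ((n : ℝ) + 1) / n * R := by
        apply lp.norm_le_of_forall_le (by positivity)
        intro k
        rw [hbapp, norm_mul, norm_inv]
        have hz : ‖∑ j ∈ Finset.range n, a (k + j)‖ ≤ ((n : ℝ) + 1) * R := by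
          have h1 := norm_le_numRad hCa (avg_mem_numRange (fun k => a k) n k)
          rw [norm_div] at h1
          have h2 : ‖((n : ℂ) + 1)‖ = (n : ℝ) + 1 := by
            norm_cast
          rw [h2, div_le_iff₀ (by positivity)] at h1
          linarith [h1]
        have h3 : ‖((n : ℂ))‖ = (n : ℝ) := by norm_cast
        rw [h3]
        rw [div_mul_eq_mul_div, ← div_mul_eq_mul_div, inv_eq_one_div]
        calc (1 / (n:ℝ)) * ‖∑ j ∈ Finset.range n, a (k + j)‖
            ≤ (1 / (n:ℝ)) * (((n : ℝ) + 1) * R) := by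
              apply mul_le_mul_of_nonneg_left hz (by positivity)
          _ = ((n : ℝ) + 1) / n * R := by ring
      calc ‖L a‖ = ‖L b‖ := by rw [hLb]
        _ ≤ ‖b‖ := hbd b
        _ ≤ ((n : ℝ) + 1) / n * R := hbnorm
    -- take the limit
    have hlim2 : Tendsto (fun n : ℕ => ((n : ℝ) + 1) / n * R) atTop (𝓝 R) := by
      have h1 : Tendsto (fun n : ℕ => ((n : ℝ) + 1) / n) atTop (𝓝 1) := by
        have := tendsto_one_div_atTop_nhds_zero_nat.add_const (1:ℝ)
        rw [zero_add] at this
        apply this.congr'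
        filter_upwards [eventually_gt_atTop 0] with n hn
        field_simp
        ring
      have := h1.mul_const R
      rwa [one_mul] at this
    refine ge_of_tendsto hlim2 ?_
    filter_upwards [eventually_gt_atTop 0] with n h
    exact hn n h
  refine ⟨key, ⟨⟨zero_le_one, fun a => by simpa using key a⟩, ?_⟩⟩
  rintro c ⟨hc0, hc⟩
  -- constant one sequence
  have hmem1 : Memℓp (fun _ : ℕ => (1 : ℂ)) ⊤ := by
    apply memℓp_infty
    refine ⟨1, ?_⟩
    rintro - ⟨k, rfl⟩
    simp
  set o : lp (fun _ : ℕ => ℂ) ⊤ := ⟨fun _ => 1, hmem1⟩ with ho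
  have hLo : L o = 1 := hone o fun k => rfl
  have h1 : (1:ℝ) ≤ c * numRad (fun k => o k) := by
    have := hc o
    rwa [hLo, norm_one] at this
  have h2 : numRad (fun k => o k) ≤ 1 := numRad_le (fun k => by simp [ho])
  calc (1:ℝ) ≤ c * numRad (fun k => o k) := h1
    _ ≤ c * 1 := mul_le_mul_of_nonneg_left h2 hc0
    _ = c := mul_one c
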